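/- Let cᵢ, dᵢ ≥ 0 with cᵢ + dᵢ > 0, and for each z ∈ {0,1}^N define matrices C(z), D(z) with entries Cᵢⱼ = Aᵢⱼ zⱼ and Dᵢⱼ = Aᵢⱼ(1 − zⱼ), where A is a 0–1 matrix. For x, y in the nonnegative orthant of ℝ^N, set fᵢ(x, y, z) = (cᵢ + (C(z)y)ᵢ) / (cᵢ + dᵢ + (C(z)y)ᵢ + (D(z)x)ᵢ). Then for any probability weights p(z) ≥ 0 summing to 1, the function F(x, y) = (1/N) ∑ᵢ ∑_z fᵢ(x, y, z) p(z) is convex in x for each fixed y, and concave in y for each fixed x, on the nonnegative orthant. -/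

import Mathlib

/-! Fix `i` and `z`. As a function of `x`, the summand is `k / (b + v)` with `v = (D(z)x)ᵢ ≥ 0`,
`k ≥ 0` and `b > 0`, a convex function of a nonnegative linear form. As a function of `y`
it is `(a + u) / (a + u + e) = 1 - e / (a + e + u)` with `u = (C(z)y)ᵢ ≥ 0` and `e ≥ 0`, which is
concave. Both properties survive the nonnegative weights `p z`, `1 / N` and summation. -/

open Set Finset Matrix

section FinsetSum

variable {𝕜 E β ι : Type*} [Semiring 𝕜] [PartialOrder 𝕜] [AddCommMonoid E] [SMul 𝕜 E]
  [AddCommMonoid β] [PartialOrder β] [IsOrderedAddMonoid β] [Module 𝕜 β]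
  {s : Set E} {t : Finset ι} {f : ι → E → β}

theorem ConvexOn.sum (hs : Convex 𝕜 s) (hf : ∀ i ∈ t, ConvexOn 𝕜 s (f i)) :
    ConvexOn 𝕜 s fun x => ∑ i ∈ t, f i x := by
  classical
  induction t using Finset.induction with
  | empty => simpa using convexOn_const 0 hs
  | insert i t hi ih =>
    simp only [Finset.sum_insert hi]
    exact (hf i (mem_insert_self i t)).add (ih fun j hj => hf j (mem_insert_of_mem hj))

theorem ConcaveOn.sum (hs : Convex 𝕜 s) (hf : ∀ i ∈ t, ConcaveOn 𝕜 s (f i)) :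
    ConcaveOn 𝕜 s fun x => ∑ i ∈ t, f i x := by
  classical
  induction t using Finset.induction with
  | empty => simpa using concaveOn_const 0 hs
  | insert i t hi ih =>
    simp only [Finset.sum_insert hi]
    exact (hf i (mem_insert_self i t)).add (ih fun j hj => hf j (mem_insert_of_mem hj))

end FinsetSum

lemma convexOn_div_add {k b : ℝ} (hk : 0 ≤ k) (hb : 0 < b) :
    ConvexOn ℝ (Ici 0) fun v : ℝ => k / (b + v) := by
  have hinv := ((convexOn_zpow (𝕜 := ℝ) (-1)).translate_right b).smul hk
  refine (hinv.subset (fun v (hv : 0 ≤ v) => show 0 < b + v by linarith) (convex_Ici 0)).congr ?_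
  intro v _
  simp [div_eq_mul_inv]

lemma concaveOn_add_div_add_add {a e : ℝ} (he : 0 ≤ e) (hae : 0 < a + e) :
    ConcaveOn ℝ (Ici 0) fun u : ℝ => (a + u) / (a + u + e) := by
  refine ((convexOn_div_add he hae).neg.add_const 1).congr fun u (hu : 0 ≤ u) => ?_
  have : a + u + e ≠ 0 := by linarith
  simp only [Pi.add_apply, Pi.neg_apply]
  field_simp
  ring

section DotProduct

variable {ι : Type*} [Fintype ι] {f : ℝ → ℝ} {w : ι → ℝ}

lemma ConvexOn.comp_dotProduct_of_nonneg (hf : ConvexOn ℝ (Ici 0) f) (hw : 0 ≤ w) :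
    ConvexOn ℝ (Ici 0) fun x : ι → ℝ => f (w ⬝ᵥ x) :=
  (hf.comp_linearMap (dotProductBilin ℝ ℝ w)).subset
    (fun _ hx => dotProduct_nonneg_of_nonneg hw hx) (convex_Ici 0)

lemma ConcaveOn.comp_dotProduct_of_nonneg (hf : ConcaveOn ℝ (Ici 0) f) (hw : 0 ≤ w) :
    ConcaveOn ℝ (Ici 0) fun x : ι → ℝ => f (w ⬝ᵥ x) :=
  (hf.comp_linearMap (dotProductBilin ℝ ℝ w)).subset
    (fun _ hx => dotProduct_nonneg_of_nonneg hw hx) (convex_Ici 0)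

end DotProduct

theorem stmt_5_general {N : ℕ} (A : Fin N → Fin N → ℝ) (hA : ∀ i j, A i j = 0 ∨ A i j = 1)
    (c d : Fin N → ℝ) (hc : ∀ i, 0 ≤ c i) (hd : ∀ i, 0 ≤ d i) (hcd : ∀ i, 0 < c i + d i)
    (p : (Fin N → Bool) → ℝ) (hp : ∀ z, 0 ≤ p z)
    (F : (Fin N → ℝ) → (Fin N → ℝ) → ℝ)
    (hF : ∀ x y, F x y = (1 / (N : ℝ)) * ∑ i, ∑ z : Fin N → Bool,
      ((c i + ∑ j, A i j * (if z j then (1:ℝ) else 0) * y j) /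
        (c i + d i + (∑ j, A i j * (if z j then (1:ℝ) else 0) * y j)
          + ∑ j, A i j * (1 - if z j then (1:ℝ) else 0) * x j)) * p z) :
    (∀ y ∈ {y : Fin N → ℝ | ∀ i, 0 ≤ y i},
      ConvexOn ℝ {x : Fin N → ℝ | ∀ i, 0 ≤ x i} (fun x => F x y)) ∧
    (∀ x ∈ {x : Fin N → ℝ | ∀ i, 0 ≤ x i},
      ConcaveOn ℝ {y : Fin N → ℝ | ∀ i, 0 ≤ y i} (fun y => F x y)) := by
  have hA₀ (i j) : 0 ≤ A i j := by rcases hA i j with h | h <;> simp [h]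
  have hC (i) (z : Fin N → Bool) : 0 ≤ fun j => A i j * (if z j then (1:ℝ) else 0) :=
    fun j => mul_nonneg (hA₀ i j) (by split <;> norm_num)
  have hD (i) (z : Fin N → Bool) : 0 ≤ fun j => A i j * (1 - if z j then (1:ℝ) else 0) :=
    fun j => mul_nonneg (hA₀ i j) (by split <;> norm_num)
  have hN : (0 : ℝ) ≤ 1 / N := by positivity
  constructor
  · intro y hy
    refine ((ConvexOn.sum (convex_Ici 0) fun i _ => ConvexOn.sum (convex_Ici 0) fun z _ => ?_).smul
      hN).congr fun x _ => (hF x y).symm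
    have hS := dotProduct_nonneg_of_nonneg (hC i z) hy
    exact (((convexOn_div_add (add_nonneg (hc i) hS) (add_pos_of_pos_of_nonneg (hcd i) hS)
      ).comp_dotProduct_of_nonneg (hD i z)).smul (hp z)).congr fun x _ => mul_comm _ _
  · intro x hx
    refine ((ConcaveOn.sum (convex_Ici 0) fun i _ => ConcaveOn.sum (convex_Ici 0) fun z _ => ?_).smul
      hN).congr fun y _ => (hF x y).symm
    have hT := dotProduct_nonneg_of_nonneg (hD i z) hx
    refine (((concaveOn_add_div_add_add (a := c i) (add_nonneg (hd i) hT) (by linarith [hcd i])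
      ).comp_dotProduct_of_nonneg (hC i z)).smul (hp z)).congr fun y _ => ?_
    simp only [smul_eq_mul, dotProduct]
    ring

/-- Proposition 1: With `C(z)ᵢⱼ = Aᵢⱼ zⱼ`, `D(z)ᵢⱼ = Aᵢⱼ(1 − zⱼ)` for a 0–1
matrix `A`, and `fᵢ(x,y,z) = (cᵢ + (C(z)y)ᵢ)/(cᵢ + dᵢ + (C(z)y)ᵢ + (D(z)x)ᵢ)`, the expected
network exposure `F(x,y) = (1/N) ∑ᵢ ∑_z fᵢ(x,y,z) p(z)` is convex in `x` and concave in `y`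
on the nonnegative orthant. -/
theorem stmt_5 {N : ℕ} (A : Fin N → Fin N → ℝ) (hA : ∀ i j, A i j = 0 ∨ A i j = 1)
    (c d : Fin N → ℝ) (hc : ∀ i, 0 ≤ c i) (hd : ∀ i, 0 ≤ d i) (hcd : ∀ i, 0 < c i + d i)
    (p : (Fin N → Bool) → ℝ) (hp : ∀ z, 0 ≤ p z) (hp1 : ∑ z : Fin N → Bool, p z = 1)
    (F : (Fin N → ℝ) → (Fin N → ℝ) → ℝ)
    (hF : ∀ x y, F x y = (1 / (N : ℝ)) * ∑ i, ∑ z : Fin N → Bool,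
      ((c i + ∑ j, A i j * (if z j then (1:ℝ) else 0) * y j) /
        (c i + d i + (∑ j, A i j * (if z j then (1:ℝ) else 0) * y j)
          + ∑ j, A i j * (1 - if z j then (1:ℝ) else 0) * x j)) * p z) :
    (∀ y ∈ {y : Fin N → ℝ | ∀ i, 0 ≤ y i},
      ConvexOn ℝ {x : Fin N → ℝ | ∀ i, 0 ≤ x i} (fun x => F x y)) ∧
    (∀ x ∈ {x : Fin N → ℝ | ∀ i, 0 ≤ x i},
      ConcaveOn ℝ {y : Fin N → ℝ | ∀ i, 0 ≤ y i} (fun y => F x y)) :=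
  stmt_5_general A hA c d hc hd hcd p hp F hF
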